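/- arXiv:2306.02738 — 4 statements merged into one kernel-verified Lean document; each statement's English description precedes it below -/
import Mathlib

section
/- If F_Z denotes the CDF of the PIT Z = F_θ(Y|X), and F_Z is continuous and strictly increasing on [0,1], then the recalibrated model F'_θ = F_Z ∘ F_θ is probabilistically calibrated: Pr(F'_θ(Y|X) ≤ α) = α for all α ∈ [0,1]. -/
open MeasureTheory

/-- If `F_Z` is the CDF of the PIT `Z = F_θ(Y|X)`, and `F_Z` is continuous and strictly
increasing on `[0,1]`, then the recalibrated model `F'_θ = F_Z ∘ F_θ` is
probabilistically calibrated. -/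
theorem quantile_recalibration_calibrated
    {Ω 𝒳 : Type*} [MeasurableSpace Ω] [MeasurableSpace 𝒳]
    (μ : Measure Ω) [IsProbabilityMeasure μ]
    (X : Ω → 𝒳) (Y : Ω → ℝ) (F : 𝒳 → ℝ → ℝ) (FZ : ℝ → ℝ)
    (hZmeas : Measurable (fun ω => F (X ω) (Y ω)))
    (hZrange : ∀ ω, F (X ω) (Y ω) ∈ Set.Icc (0 : ℝ) 1)
    (hFZ : ∀ t : ℝ, μ {ω | F (X ω) (Y ω) ≤ t} = ENNReal.ofReal (FZ t))
    (hcont : Continuous FZ)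
    (hmono : StrictMonoOn FZ (Set.Icc (0 : ℝ) 1)) :
    ∀ α ∈ Set.Icc (0 : ℝ) 1,
      μ {ω | FZ (F (X ω) (Y ω)) ≤ α} = ENNReal.ofReal α := by
  intro α hα
  obtain ⟨hα0, hα1⟩ := hα
  -- FZ 1 = 1
  have h1 : FZ 1 = 1 := by
    have : μ {ω | F (X ω) (Y ω) ≤ 1} = 1 := by
      have : {ω | F (X ω) (Y ω) ≤ 1} = Set.univ := by
        ext ω; simp [(hZrange ω).2]
      rw [this]; simp
    have h := (hFZ 1).symm.trans this
    rwa [ENNReal.ofReal_eq_one] at h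
  -- FZ 0 ≤ 0
  have h0 : FZ 0 ≤ 0 := by
    have hneg : ∀ t < (0 : ℝ), FZ t ≤ 0 := by
      intro t ht
      have : μ {ω | F (X ω) (Y ω) ≤ t} = 0 := by
        have : {ω | F (X ω) (Y ω) ≤ t} = ∅ := by
          ext ω
          simp only [Set.mem_setOf_eq, Set.mem_empty_iff_false, iff_false, not_le]
          exact lt_of_lt_of_le ht (hZrange ω).1
        rw [this]; simp
      have h := (hFZ t).symm.trans this
      exact ENNReal.ofReal_eq_zero.mp h
    have htend : Filter.Tendsto FZ (nhdsWithin 0 (Set.Iio 0)) (nhds (FZ 0)) :=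
      (hcont.continuousAt.tendsto).mono_left nhdsWithin_le_nhds
    refine le_of_tendsto htend ?_
    filter_upwards [self_mem_nhdsWithin] with t ht
    exact hneg t ht
  -- IVT: find t ∈ [0,1] with FZ t = α
  have hmem : α ∈ Set.Icc (FZ 0) (FZ 1) := ⟨le_trans h0 hα0, by rw [h1]; exact hα1⟩
  obtain ⟨t, ht, hFt⟩ := intermediate_value_Icc (by norm_num : (0:ℝ) ≤ 1)
    hcont.continuousOn hmem
  have hset : {ω | FZ (F (X ω) (Y ω)) ≤ α} = {ω | F (X ω) (Y ω) ≤ t} := by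
    ext ω
    simp only [Set.mem_setOf_eq]
    rw [← hFt]
    exact hmono.le_iff_le (hZrange ω) ht
  rw [hset, hFZ t, hFt]
end

section
/- Let S_1, ..., S_{N'} be exchangeable real random variables together with a test score S, all distinct almost surely. For α ∈ (0,1), let q̂ = S_{(⌈(N'+1)α⌉)} be the ⌈(N'+1)α⌉-th smallest value among {S_1, ..., S_{N'}, +∞}. Then Pr(S ≤ q̂) = ⌈(N'+1)α⌉ / (N'+1) whenever ⌈(N'+1)α⌉ ≤ N', and Pr(S ≤ q̂) = 1 otherwise. -/
/-!
Let `R_j` be the rank of the `j`-th score among all `N' + 1` scores and `k = ⌈(N' + 1)α⌉`.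
When the scores are distinct the ranks are a permutation of `1, …, N' + 1`, so exactly `k` of
the events `{R_j ≤ k}` occur; by exchangeability these events are equiprobable, hence each has
probability `k / (N' + 1)`. Since `q̂` is the `k`-th smallest calibration score, `S ≤ q̂` holds
exactly when fewer than `k` calibration scores lie below `S`, that is, when the test score has
rank `R_{N'+1} ≤ k`. For `k > N'` the quantile `q̂` is `+∞`.
-/

open MeasureTheory ProbabilityTheory

/-- The `k`-th smallest value (1-indexed) of a finite tuple in a linear order
(junk value `⊤` if out of range). -/
noncomputable def orderStatE {n : ℕ} (v : Fin n → EReal) (k : ℕ) : EReal :=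
  if h : k - 1 < n then v (Tuple.sort v ⟨k - 1, h⟩) else ⊤

open scoped ENNReal
open Finset

lemma Equiv.Perm.card_filter_comp {α : Type*} [Fintype α] (σ : Equiv.Perm α) (p : α → Prop)
    [DecidablePred p] : #{i | p (σ i)} = #{i | p i} := by
  simp only [card_filter]
  exact Equiv.sum_comp σ fun i => if p i then 1 else 0

namespace Tuple

variable {β : Type*} [LinearOrder β] {n : ℕ}

def rank (v : Fin n → β) (j : Fin n) : ℕ := #{i | v i ≤ v j}

lemma rank_comp_perm (v : Fin n → β) (σ : Equiv.Perm (Fin n)) (j : Fin n) :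
    rank (v ∘ σ) j = rank v (σ j) :=
  σ.card_filter_comp (v · ≤ v (σ j))

lemma rank_lt_rank {v : Fin n → β} {i j : Fin n} (h : v i < v j) : rank v i < rank v j := by
  refine card_lt_card (ssubset_of_subset_of_ne (fun l hl => ?_) fun heq => ?_)
  · simp only [mem_filter, mem_univ, true_and] at hl ⊢
    exact hl.trans h.le
  · have : j ∈ ({l | v l ≤ v i} : Finset (Fin n)) := heq ▸ by simp
    simp only [mem_filter, mem_univ, true_and] at this
    exact this.not_gt h

lemma rank_injective {v : Fin n → β} (hv : Function.Injective v) :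
    Function.Injective (rank v) := by
  intro i j hij
  by_contra hne
  rcases (hv.ne hne).lt_or_gt with h | h
  · exact (rank_lt_rank h).ne hij
  · exact (rank_lt_rank h).ne' hij

lemma rank_mem_Icc (v : Fin n → β) (j : Fin n) : rank v j ∈ Icc 1 n :=
  mem_Icc.2 ⟨card_pos.2 ⟨j, by simp⟩, (card_filter_le _ _).trans (card_fin n).le⟩

lemma image_rank {v : Fin n → β} (hv : Function.Injective v) :
    univ.image (rank v) = Icc 1 n :=
  eq_of_subset_of_card_le (by simpa [subset_iff] using rank_mem_Icc v)
    (by simp [card_image_of_injective _ (rank_injective hv)])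

lemma card_rank_le {v : Fin n → β} (hv : Function.Injective v) {k : ℕ} (hk : k ≤ n) :
    #{j | rank v j ≤ k} = k := by
  have hIcc : ({m ∈ Icc 1 n | m ≤ k} : Finset ℕ) = Icc 1 k := by
    ext m
    simp only [mem_filter, mem_Icc]
    omega
  rw [← card_image_of_injective _ (rank_injective hv), ← filter_image (p := (· ≤ k)),
    image_rank hv, hIcc, Nat.card_Icc, Nat.add_sub_cancel]

lemma rank_snoc_last {v : Fin n → β} {x : β} (hx : ∀ i, v i ≠ x) :
    rank (Fin.snoc v x : Fin (n + 1) → β) (Fin.last n) = #{i | v i < x} + 1 := by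
  simp only [rank, Fin.snoc_last, card_filter, Fin.sum_univ_castSucc, Fin.snoc_castSucc, le_refl,
    if_true]
  congr 2 with i
  simp only [(hx i).le_iff_lt]

lemma measurable_rank [MeasurableSpace β] [TopologicalSpace β] [OrderClosedTopology β]
    [OpensMeasurableSpace β] [SecondCountableTopology β] (j : Fin n) :
    Measurable fun v : Fin n → β => rank v j := by
  simp only [rank, card_filter]
  exact Finset.measurable_sum _ fun i _ =>
    Measurable.ite (measurableSet_le (measurable_pi_apply i) (measurable_pi_apply j))
      measurable_const measurable_const

end Tuple

lemma Monotone.le_apply_iff_card_lt_le {γ : Type*} [LinearOrder γ] {n : ℕ} {w : Fin n → γ}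
    (hw : Monotone w) (m : Fin n) (x : γ) : x ≤ w m ↔ #{i | w i < x} ≤ m := by
  constructor
  · intro h
    calc #{i | w i < x} ≤ #(Iio m) :=
          card_le_card fun i hi => mem_Iio.2 <| lt_of_not_ge fun hmi =>
            ((mem_filter.1 hi).2.trans_le h).not_ge (hw hmi)
      _ = m := Fin.card_Iio m
  · intro h
    by_contra! hx
    have : Iic m ⊆ ({i | w i < x} : Finset (Fin n)) := fun i hi =>
      mem_filter.2 ⟨mem_univ i, (hw (mem_Iic.1 hi)).trans_lt hx⟩
    have := card_le_card this
    rw [Fin.card_Iic] at this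
    omega

lemma le_orderStatE_iff {n k : ℕ} (u : Fin n → EReal) (hk1 : 1 ≤ k) (hkn : k ≤ n) (x : EReal) :
    x ≤ orderStatE u k ↔ #{i | u i < x} < k := by
  have hk : k - 1 < n := by omega
  rw [orderStatE, dif_pos hk, ← Function.comp_apply (f := u),
    (Tuple.monotone_sort u).le_apply_iff_card_lt_le, Function.comp_def,
    (Tuple.sort u).card_filter_comp (u · < x), Fin.val_mk]
  omega

lemma orderStatE_snoc_top {n k : ℕ} (v : Fin n → EReal) (hk : n < k) :
    orderStatE (Fin.snoc v ⊤) k = ⊤ := by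
  set u : Fin (n + 1) → EReal := Fin.snoc v ⊤
  rw [orderStatE]
  split_ifs with h
  · have hlast : (⟨k - 1, h⟩ : Fin (n + 1)) = Fin.last n := Fin.ext (by simp; omega)
    refine top_unique ?_
    calc ⊤ = (u ∘ Tuple.sort u) ((Tuple.sort u).symm (Fin.last n)) := by simp [u]
      _ ≤ (u ∘ Tuple.sort u) (Fin.last n) := Tuple.monotone_sort u (Fin.le_last _)
      _ = u (Tuple.sort u ⟨k - 1, h⟩) := by rw [hlast, Function.comp_apply]
  · rfl

section Exchangeable

variable {Ω β : Type*} [MeasurableSpace Ω] {μ : Measure Ω} [LinearOrder β] [MeasurableSpace β]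
  [TopologicalSpace β] [OrderClosedTopology β] [OpensMeasurableSpace β]
  [SecondCountableTopology β] {n : ℕ} {X : Ω → Fin n → β}

lemma measurableSet_rank_le (hX : Measurable X) (j : Fin n) (k : ℕ) :
    MeasurableSet {ω | Tuple.rank (X ω) j ≤ k} :=
  ((Tuple.measurable_rank j).comp hX) measurableSet_Iic

lemma measure_rank_le_eq_of_exchangeable (hX : Measurable X)
    (hexch : ∀ π : Equiv.Perm (Fin n), μ.map X = μ.map fun ω => X ω ∘ π) (k : ℕ) (i j : Fin n) :
    μ {ω | Tuple.rank (X ω) i ≤ k} = μ {ω | Tuple.rank (X ω) j ≤ k} := by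
  have hB : MeasurableSet {v : Fin n → β | Tuple.rank v i ≤ k} :=
    Tuple.measurable_rank i measurableSet_Iic
  have hXπ : Measurable fun ω => X ω ∘ Equiv.swap i j := by fun_prop
  calc μ {ω | Tuple.rank (X ω) i ≤ k} = μ.map X {v | Tuple.rank v i ≤ k} :=
        (Measure.map_apply hX hB).symm
    _ = μ.map (fun ω => X ω ∘ Equiv.swap i j) {v | Tuple.rank v i ≤ k} := by rw [hexch]
    _ = μ {ω | Tuple.rank (X ω) j ≤ k} := by
        rw [Measure.map_apply hXπ hB]
        simp_rw [Set.preimage_ofPred_eq, Tuple.rank_comp_perm, Equiv.swap_apply_left]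

lemma sum_measure_rank_le [IsProbabilityMeasure μ] (hX : Measurable X)
    (hinj : ∀ᵐ ω ∂μ, Function.Injective (X ω)) {k : ℕ} (hk : k ≤ n) :
    ∑ j, μ {ω | Tuple.rank (X ω) j ≤ k} = k := by
  have hA := measurableSet_rank_le hX
  calc ∑ j, μ {ω | Tuple.rank (X ω) j ≤ k}
        = ∫⁻ ω, ∑ j, {ω | Tuple.rank (X ω) j ≤ k}.indicator 1 ω ∂μ := by
        rw [lintegral_finsetSum _ fun j _ => measurable_one.indicator (hA j k)]
        simp_rw [lintegral_indicator_one (hA _ k)]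
    _ = ∫⁻ _, (k : ℝ≥0∞) ∂μ := lintegral_congr_ae <| hinj.mono fun ω hω => by
        simp only [Set.indicator_apply, Set.mem_ofPred_eq, Pi.one_apply]
        rw [sum_boole, Tuple.card_rank_le hω hk]
    _ = k := by simp

theorem measure_rank_le_of_exchangeable [IsProbabilityMeasure μ] (hX : Measurable X)
    (hexch : ∀ π : Equiv.Perm (Fin n), μ.map X = μ.map fun ω => X ω ∘ π)
    (hinj : ∀ᵐ ω ∂μ, Function.Injective (X ω)) {k : ℕ} (hk : k ≤ n) (j : Fin n) :
    μ {ω | Tuple.rank (X ω) j ≤ k} = k / n := by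
  have hsum := sum_measure_rank_le hX hinj hk
  simp_rw [measure_rank_le_eq_of_exchangeable hX hexch k _ j, sum_const, card_univ,
    Fintype.card_fin, nsmul_eq_mul] at hsum
  rw [ENNReal.eq_div_iff (by simpa using j.pos.ne') (ENNReal.natCast_ne_top n), hsum]

end Exchangeable

lemma coe_le_orderStatE_snoc_top_iff {n k : ℕ} {v : Fin n → ℝ} {x : ℝ} (hx : ∀ i, v i ≠ x)
    (hk1 : 1 ≤ k) (hkn : k ≤ n) :
    (x : EReal) ≤ orderStatE (Fin.snoc (fun i => (v i : EReal)) ⊤) k ↔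
      Tuple.rank (Fin.snoc v x : Fin (n + 1) → ℝ) (Fin.last n) ≤ k := by
  have hcount : #{i | (Fin.snoc (fun i => (v i : EReal)) ⊤ : Fin (n + 1) → EReal) i < x} =
      #{i | v i < x} := by
    simp only [card_filter, Fin.sum_univ_castSucc, Fin.snoc_castSucc, Fin.snoc_last,
      EReal.coe_lt_coe_iff, not_top_lt, if_false, add_zero]
  rw [le_orderStatE_iff _ hk1 (by omega), hcount, Tuple.rank_snoc_last hx]
  omega

theorem conformal_coverage_general
    {Ω : Type*} [MeasurableSpace Ω] (μ : Measure Ω) [IsProbabilityMeasure μ]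
    (N' : ℕ) (V : Fin N' → Ω → ℝ) (S : Ω → ℝ)
    (hV : ∀ i, Measurable (V i)) (hS : Measurable S)
    (W : Fin (N' + 1) → Ω → ℝ) (hW : W = Fin.snoc V S)
    (hexch : ∀ π : Equiv.Perm (Fin (N' + 1)),
      μ.map (fun ω => fun i => W i ω) = μ.map (fun ω => fun i => W (π i) ω))
    (hdist : ∀ᵐ ω ∂μ, Function.Injective (fun i => W i ω))
    (α : ℝ) (hα : α ∈ Set.Ioo (0 : ℝ) 1)
    (qhat : Ω → EReal)
    (hqhat : ∀ ω, qhat ω = orderStatE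
      (Fin.snoc (fun i => ((V i ω : ℝ) : EReal)) (⊤ : EReal)) ⌈((N' : ℝ) + 1) * α⌉₊) :
    (⌈((N' : ℝ) + 1) * α⌉₊ ≤ N' →
      μ {ω | (S ω : EReal) ≤ qhat ω} =
        ENNReal.ofReal ((⌈((N' : ℝ) + 1) * α⌉₊ : ℝ) / ((N' : ℝ) + 1))) ∧
    (N' < ⌈((N' : ℝ) + 1) * α⌉₊ → μ {ω | (S ω : EReal) ≤ qhat ω} = 1) := by
  obtain ⟨hα0, hα1⟩ := hα
  set k := ⌈((N' : ℝ) + 1) * α⌉₊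
  have hk_pos : 1 ≤ k := Nat.one_le_iff_ne_zero.2 (Nat.ceil_pos.2 (by positivity)).ne'
  have hk_le : k ≤ N' + 1 := Nat.ceil_le.2 (by push_cast; nlinarith)
  subst hW
  set X : Ω → Fin (N' + 1) → ℝ := fun ω i => (Fin.snoc V S : Fin (N' + 1) → Ω → ℝ) i ω
  have hXω : ∀ ω, X ω = Fin.snoc (fun i => V i ω) (S ω) := fun ω =>
    Fin.comp_snoc (fun f : Ω → ℝ => f ω) V S
  have hX : Measurable X := measurable_pi_lambda _ fun i => by
    induction i using Fin.lastCases <;> simp [X, hV, hS]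
  refine ⟨fun hkN => ?_, fun hNk => by simp [hqhat, orderStatE_snoc_top _ hNk]⟩
  have hevent : {ω | (S ω : EReal) ≤ qhat ω} =ᵐ[μ] {ω | Tuple.rank (X ω) (Fin.last N') ≤ k} :=
    Filter.eventuallyEq_set.2 <| hdist.mono fun ω hω => by
      have hne : ∀ i, V i ω ≠ S ω := fun i h =>
        (Fin.castSucc_lt_last i).ne (hω (by simpa [X] using h))
      rw [Set.mem_ofPred_eq, Set.mem_ofPred_eq, hqhat, hXω,
        coe_le_orderStatE_snoc_top_iff hne hk_pos hkN]
  rw [measure_congr hevent, measure_rank_le_of_exchangeable hX hexch hdist hk_le (Fin.last N'),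
    ENNReal.ofReal_div_of_pos (by positivity)]
  norm_cast

/-- Finite-sample coverage of split conformal prediction: if the calibration scores
`S_1, …, S_{N'}` and the test score `S` are exchangeable and a.s. distinct, and
`q̂` is the `⌈(N'+1)α⌉`-th smallest value among `{S_1, …, S_{N'}, +∞}`, then
`Pr(S ≤ q̂) = ⌈(N'+1)α⌉/(N'+1)` when `⌈(N'+1)α⌉ ≤ N'`, and `Pr(S ≤ q̂) = 1` otherwise. -/
theorem conformal_coverage
    {Ω : Type*} [MeasurableSpace Ω] (μ : Measure Ω) [IsProbabilityMeasure μ]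
    (N' : ℕ) (hN' : 0 < N') (V : Fin N' → Ω → ℝ) (S : Ω → ℝ)
    (hV : ∀ i, Measurable (V i)) (hS : Measurable S)
    (W : Fin (N' + 1) → Ω → ℝ) (hW : W = Fin.snoc V S)
    (hexch : ∀ π : Equiv.Perm (Fin (N' + 1)),
      μ.map (fun ω => fun i => W i ω) = μ.map (fun ω => fun i => W (π i) ω))
    (hdist : ∀ᵐ ω ∂μ, Function.Injective (fun i => W i ω))
    (α : ℝ) (hα : α ∈ Set.Ioo (0 : ℝ) 1)
    (qhat : Ω → EReal)
    (hqhat : ∀ ω, qhat ω = orderStatE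
      (Fin.snoc (fun i => ((V i ω : ℝ) : EReal)) (⊤ : EReal)) ⌈((N' : ℝ) + 1) * α⌉₊) :
    (⌈((N' : ℝ) + 1) * α⌉₊ ≤ N' →
      μ {ω | (S ω : EReal) ≤ qhat ω} =
        ENNReal.ofReal ((⌈((N' : ℝ) + 1) * α⌉₊ : ℝ) / ((N' : ℝ) + 1))) ∧
    (N' < ⌈((N' : ℝ) + 1) * α⌉₊ → μ {ω | (S ω : EReal) ≤ qhat ω} = 1) :=
  conformal_coverage_general μ N' V S hV hS W hW hexch hdist α hα qhat hqhat
end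

section
/- Quantile recalibration with calibration map φ_DCP(α) = (1/(N'+1)) Σᵢ 1(Z'_i ≤ α) produces the same predictive distribution as Distributional Conformal Prediction with conformity score s_θ(y|x) = F_θ(y|x): for every α ∈ [0,1] and x, the recalibrated CDF F'_θ(·|x) = φ_DCP ∘ F_θ(·|x) has quantile function Q'_θ(α|x) = Q_θ(Z'_{(⌈(N'+1)α⌉)} | x), the DCP conformalized quantile. -/
/-! With `k = ⌈(N'+1)α⌉`, `α ≤ φ_DCP(F(r|x))` holds iff at least `k` calibration scores are
`≤ F(r|x)`, i.e. iff the `k`-th smallest augmented score `Z'_(k)` is `≤ F(r|x)`. As `F(·|x)` is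
strictly increasing with right inverse `Q(·|x)`, this is `Q(Z'_(k)|x) ≤ r`, so the least such `r`
is `Q(Z'_(k)|x)`; the degenerate values `Z'_(k) = ⊥` (`k = 0`) and `Z'_(k) = ⊤` (`k = N'+1`)
make the constraint hold for every `r`, resp. for none. -/

open MeasureTheory

/-- The `k`-th smallest value (1-indexed) among `{Z_1, …, Z_{N'}, +∞}` viewed in `EReal`
(with the conventions `k = 0 ↦ ⊥` and out-of-range `↦ ⊤`). -/
noncomputable def augOrderStatE (N' : ℕ) (Z : Fin N' → ℝ) (k : ℕ) : EReal :=
  if k = 0 then ⊥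
  else if h : k - 1 < N' + 1 then
    (Fin.snoc (fun i => ((Z i : ℝ) : EReal)) (⊤ : EReal) : Fin (N' + 1) → EReal)
      (Tuple.sort
        (Fin.snoc (fun i => ((Z i : ℝ) : EReal)) (⊤ : EReal) : Fin (N' + 1) → EReal)
        ⟨k - 1, h⟩)
  else ⊤

open Finset

theorem Tuple.apply_sort_le_iff_lt_card {α : Type*} [LinearOrder α] {m : ℕ} (f : Fin m → α)
    (j : Fin m) (a : α) : f (Tuple.sort f j) ≤ a ↔ (j : ℕ) < #{i | f i ≤ a} := by
  have h := Tuple.lt_card_le_iff_apply_le_of_monotone (j := j) (a := a) (Tuple.monotone_sort f)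
  rwa [card_equiv (t := {i | f i ≤ a}) (Tuple.sort f) (by simp), Iff.comm] at h

theorem card_filter_snoc_top_le_coe {n : ℕ} (Z : Fin n → ℝ) (t : ℝ) :
    #{j | (Fin.snoc (fun i => ((Z i : ℝ) : EReal)) ⊤ : Fin (n + 1) → EReal) j ≤ t} =
      #{i | Z i ≤ t} := by
  rw [Fin.univ_castSuccEmb, filter_cons_of_neg _ _ _ _ (by simp), filter_map, card_map]
  simp [Function.comp_def]

section augOrderStatE

variable {N : ℕ} (Z : Fin N → ℝ)

theorem augOrderStatE_le_coe_iff (k : ℕ) (t : ℝ) :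
    augOrderStatE N Z k ≤ t ↔ k ≤ #{i | Z i ≤ t} := by
  unfold augOrderStatE
  split_ifs with hk0 hk
  · simp [hk0]
  · rw [Tuple.apply_sort_le_iff_lt_card, card_filter_snoc_top_le_coe, Fin.val_mk]
    omega
  · have : #{i | Z i ≤ t} ≤ N := (card_filter_le _ _).trans_eq (card_fin N)
    simp only [top_le_iff, EReal.coe_ne_top, false_iff, not_le]
    omega

theorem augOrderStatE_eq_bot_or_eq_top_or_eq_coe (k : ℕ) :
    augOrderStatE N Z k = ⊥ ∨ augOrderStatE N Z k = ⊤ ∨ ∃ i, augOrderStatE N Z k = Z i := by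
  unfold augOrderStatE
  split_ifs
  · exact .inl rfl
  · generalize Tuple.sort (α := EReal) _ _ = j
    induction j using Fin.lastCases with
    | last => exact .inr (.inl (Fin.snoc_last _ _))
    | cast i => exact .inr (.inr ⟨i, Fin.snoc_castSucc _ _ _⟩)
  · exact .inr (.inl rfl)

end augOrderStatE

namespace EReal

variable {P : ℝ → Prop}

theorem sInf_setOf_coe_eq_bot (h : ∀ r, P r) : sInf {y : EReal | ∃ r : ℝ, y = r ∧ P r} = ⊥ :=
  sInf_eq_bot.2 fun b hb => by
    induction b using EReal.rec with
    | bot => exact absurd hb (lt_irrefl ⊥)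
    | coe y => exact ⟨(y - 1 : ℝ), ⟨y - 1, rfl, h _⟩, by exact_mod_cast sub_one_lt y⟩
    | top => exact ⟨(0 : ℝ), ⟨0, rfl, h 0⟩, coe_lt_top 0⟩

theorem sInf_setOf_coe_eq_top (h : ∀ r, ¬ P r) : sInf {y : EReal | ∃ r : ℝ, y = r ∧ P r} = ⊤ :=
  sInf_eq_top.2 fun _ ⟨r, _, hr⟩ => absurd hr (h r)

theorem sInf_setOf_coe_eq_of_iff {q : ℝ} (h : ∀ r, P r ↔ q ≤ r) :
    sInf {y : EReal | ∃ r : ℝ, y = r ∧ P r} = q :=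
  IsGLB.sInf_eq <| IsLeast.isGLB
    ⟨⟨q, rfl, (h q).2 le_rfl⟩, fun _ ⟨r, hy, hr⟩ => hy ▸ EReal.coe_le_coe_iff.2 ((h r).1 hr)⟩

end EReal

theorem le_one_div_mul_sum_boole_iff_ceil_le {ι : Type*} [Fintype ι] (p : ι → Prop)
    [DecidablePred p] {c : ℝ} (hc : 0 < c) (α : ℝ) :
    α ≤ 1 / c * ∑ i, (if p i then (1 : ℝ) else 0) ↔ ⌈c * α⌉₊ ≤ #{i | p i} := by
  rw [sum_boole, one_div, inv_mul_eq_div, le_div_iff₀ hc, Nat.ceil_le, mul_comm]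

theorem quantile_recalibration_eq_dcp_general
    {𝒳 : Type*} (N' : ℕ)
    (F Q : 𝒳 → ℝ → ℝ)
    (hFmono : ∀ x, StrictMono (F x))
    (hQ : ∀ x, ∀ p ∈ Set.Ioo (0 : ℝ) 1, F x (Q x p) = p)
    (Z' : Fin N' → ℝ)
    (hZ' : ∀ i, Z' i ∈ Set.Ioo (0 : ℝ) 1)
    (QE : 𝒳 → EReal → EReal)
    (hQEbot : ∀ x, QE x ⊥ = ⊥) (hQEtop : ∀ x, QE x ⊤ = ⊤)
    (hQEcoe : ∀ x (r : ℝ), QE x (r : EReal) = ((Q x r : ℝ) : EReal)) :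
    ∀ α ∈ Set.Icc (0 : ℝ) 1, ∀ x : 𝒳,
      sInf {y : EReal | ∃ r : ℝ, y = (r : EReal) ∧
          α ≤ (1 / ((N' : ℝ) + 1)) *
            ∑ i : Fin N', if Z' i ≤ F x r then (1 : ℝ) else 0} =
        QE x (augOrderStatE N' Z' ⌈((N' : ℝ) + 1) * α⌉₊) := by
  intro α _ x
  set s := augOrderStatE N' Z' ⌈((N' : ℝ) + 1) * α⌉₊
  have hcal (r : ℝ) : α ≤ (1 / ((N' : ℝ) + 1)) *
      ∑ i : Fin N', (if Z' i ≤ F x r then (1 : ℝ) else 0) ↔ s ≤ (F x r : EReal) := by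
    rw [le_one_div_mul_sum_boole_iff_ceil_le _ (by positivity), augOrderStatE_le_coe_iff]
  simp_rw [hcal]
  have hs : s = ⊥ ∨ s = ⊤ ∨ ∃ i, s = Z' i := augOrderStatE_eq_bot_or_eq_top_or_eq_coe Z' _
  rcases hs with hs | hs | ⟨i, hs⟩ <;> rw [hs]
  · rw [hQEbot]
    exact EReal.sInf_setOf_coe_eq_bot fun _ => bot_le
  · rw [hQEtop]
    exact EReal.sInf_setOf_coe_eq_top fun _ => (EReal.coe_lt_top _).not_ge
  · rw [hQEcoe]
    refine EReal.sInf_setOf_coe_eq_of_iff fun r => ?_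
    rw [← (hFmono x).le_iff_le, hQ x _ (hZ' i), EReal.coe_le_coe_iff]

/-- Quantile recalibration with the calibration map
`φ_DCP(α) = (1/(N'+1)) ∑ᵢ 1(Z'ᵢ ≤ α)` produces the same predictive distribution as
Distributional Conformal Prediction with conformity score `F_θ(y|x)`: for every
`α ∈ [0,1]` and every `x`, the quantile function of the recalibrated CDF
`φ_DCP ∘ F_θ(·|x)` (its generalized inverse, computed in `EReal`) equals the DCP
conformalized quantile `Q_θ(Z'_(⌈(N'+1)α⌉) | x)`. -/
theorem quantile_recalibration_eq_dcp
    {𝒳 : Type*} (N' : ℕ) (hN' : 0 < N')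
    (F Q : 𝒳 → ℝ → ℝ)
    (hFcont : ∀ x, Continuous (F x))
    (hFmono : ∀ x, StrictMono (F x))
    (hFrange : ∀ x y, F x y ∈ Set.Ioo (0 : ℝ) 1)
    (hFbot : ∀ x, Filter.Tendsto (F x) Filter.atBot (nhds 0))
    (hFtop : ∀ x, Filter.Tendsto (F x) Filter.atTop (nhds 1))
    (hQ : ∀ x, ∀ p ∈ Set.Ioo (0 : ℝ) 1, F x (Q x p) = p)
    (Z' : Fin N' → ℝ)
    (hZ' : ∀ i, Z' i ∈ Set.Ioo (0 : ℝ) 1)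
    (hZdist : Function.Injective Z')
    (QE : 𝒳 → EReal → EReal)
    (hQEbot : ∀ x, QE x ⊥ = ⊥) (hQEtop : ∀ x, QE x ⊤ = ⊤)
    (hQEcoe : ∀ x (r : ℝ), QE x (r : EReal) = ((Q x r : ℝ) : EReal)) :
    ∀ α ∈ Set.Icc (0 : ℝ) 1, ∀ x : 𝒳,
      sInf {y : EReal | ∃ r : ℝ, y = (r : EReal) ∧
          α ≤ (1 / ((N' : ℝ) + 1)) *
            ∑ i : Fin N', if Z' i ≤ F x r then (1 : ℝ) else 0} =
        QE x (augOrderStatE N' Z' ⌈((N' : ℝ) + 1) * α⌉₊) :=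
  quantile_recalibration_eq_dcp_general N' F Q hFmono hQ Z' hZ' QE hQEbot hQEtop hQEcoe
end

section
/- If F : ℝ → [0,1] is a continuous strictly increasing CDF with quantile function Q = F^{-1}, and φ : [0,1] → [0,1] is a (generalized) CDF with generalized inverse φ^{-1}, then the composed map φ ∘ F is the generalized inverse of Q ∘ φ^{-1}: for y ∈ ℝ and α ∈ [0,1], (Q ∘ φ^{-1})(α) ≤ y if and only if α ≤ (φ ∘ F)(y), assuming φ is right-continuous and nondecreasing. -/
/-- If `F : ℝ → [0,1]` is a continuous strictly increasing CDF with (generalized inverse)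
quantile function `Q`, and `φ : [0,1] → [0,1]` is nondecreasing and right-continuous with
`φ(1) = 1` and generalized inverse `φ⁻¹(α) = inf {z : φ(z) ≥ α}`, then `φ ∘ F` is the
generalized inverse of `Q ∘ φ⁻¹`: for all `y ∈ ℝ` and `α ∈ [0,1]`,
`(Q ∘ φ⁻¹)(α) ≤ y ↔ α ≤ (φ ∘ F)(y)`. -/
theorem composed_cdf_generalized_inverse
    (F : ℝ → ℝ) (Q : ℝ → EReal) (φ : ℝ → ℝ)
    (hFcont : Continuous F) (hFmono : StrictMono F)
    (hFrange : ∀ y, F y ∈ Set.Icc (0 : ℝ) 1)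
    (hQ : ∀ p : ℝ, Q p = sInf {y : EReal | ∃ r : ℝ, y = (r : EReal) ∧ p ≤ F r})
    (hφmono : MonotoneOn φ (Set.Icc (0 : ℝ) 1))
    (hφrange : ∀ z ∈ Set.Icc (0 : ℝ) 1, φ z ∈ Set.Icc (0 : ℝ) 1)
    (hφrc : ∀ z ∈ Set.Ico (0 : ℝ) 1, ContinuousWithinAt φ (Set.Ici z) z)
    (hφ1 : φ 1 = 1)
    (φinv : ℝ → ℝ)
    (hφinv : ∀ α ∈ Set.Icc (0 : ℝ) 1,
      φinv α = sInf {z | z ∈ Set.Icc (0 : ℝ) 1 ∧ α ≤ φ z}) :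
    ∀ (y : ℝ), ∀ α ∈ Set.Icc (0 : ℝ) 1,
      (Q (φinv α) ≤ (y : EReal)) ↔ α ≤ φ (F y) := by
  intro y α hα
  set S : Set ℝ := {z | z ∈ Set.Icc (0 : ℝ) 1 ∧ α ≤ φ z} with hS
  have h1S : (1 : ℝ) ∈ S := ⟨⟨zero_le_one, le_refl 1⟩, by rw [hφ1]; exact hα.2⟩
  have hSne : S.Nonempty := ⟨1, h1S⟩
  have hSbd : BddBelow S := ⟨0, fun z hz => hz.1.1⟩
  set p := φinv α with hp
  have hpdef : p = sInf S := hφinv α hα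
  have hp0 : 0 ≤ p := hpdef ▸ le_csInf hSne (fun z hz => hz.1.1)
  have hp1 : p ≤ 1 := hpdef ▸ csInf_le hSbd h1S
  -- Step 1 : α ≤ φ p
  have hpS : α ≤ φ p := by
    rcases eq_or_lt_of_le hp1 with h | h
    · rw [h, hφ1]; exact hα.2
    · have hrc : Filter.Tendsto φ (nhdsWithin p (Set.Ici p)) (nhds (φ p)) :=
        hφrc p ⟨hp0, h⟩
      have hrc' : Filter.Tendsto φ (nhdsWithin p (Set.Ioi p)) (nhds (φ p)) :=
        hrc.mono_left (nhdsWithin_mono p Set.Ioi_subset_Ici_self)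
      have key : ∀ z ∈ Set.Ioc p 1, α ≤ φ z := by
        intro z hz
        obtain ⟨s, hsS, hs⟩ := exists_lt_of_csInf_lt hSne (hpdef ▸ hz.1)
        exact le_trans hsS.2 (hφmono hsS.1 ⟨le_trans hsS.1.1 hs.le, hz.2⟩ hs.le)
      have hmem : Set.Ioc p 1 ∈ nhdsWithin p (Set.Ioi p) := by
        rw [← Set.Ioi_inter_Iic]
        exact Filter.inter_mem self_mem_nhdsWithin
          (nhdsWithin_le_nhds (Iic_mem_nhds h))
      have hev : ∀ᶠ z in nhdsWithin p (Set.Ioi p), α ≤ φ z :=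
        Filter.eventually_of_mem hmem key
      exact ge_of_tendsto hrc' hev
  -- Step 2 : Q p ≤ y ↔ p ≤ F y
  have hQiff : Q p ≤ (y : EReal) ↔ p ≤ F y := by
    constructor
    · intro hle
      by_contra hcon
      push_neg at hcon
      have hev : ∀ᶠ x in nhdsWithin y (Set.Ioi y), F x < p :=
        ((hFcont.tendsto y).eventually (Filter.Tendsto.eventually_lt_const hcon
          Filter.tendsto_id)).filter_mono nhdsWithin_le_nhds
      obtain ⟨x, hxF, hxy⟩ := (hev.and self_mem_nhdsWithin).exists
      have hxQ : (x : EReal) ≤ Q p := by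
        rw [hQ]
        apply le_sInf
        rintro e ⟨r, rfl, hr⟩
        exact_mod_cast (hFmono.lt_iff_lt.mp (lt_of_lt_of_le hxF hr)).le
      have : (x : EReal) ≤ (y : EReal) := le_trans hxQ hle
      exact absurd (EReal.coe_le_coe_iff.mp this) (not_le.mpr hxy)
    · intro hle
      rw [hQ]
      exact sInf_le ⟨y, rfl, hle⟩
  rw [hQiff]
  constructor
  · intro hle
    exact le_trans hpS (hφmono ⟨hp0, hp1⟩ (hFrange y) hle)
  · intro hle
    calc p ≤ F y := hpdef ▸ csInf_le hSbd ⟨hFrange y, hle⟩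
end
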